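/- Let N be a nonlinear connection and 𝓗 a smooth autoparallel function which is r-homogeneous in momenta (k_ρ ∂̄^ρ 𝓗 = r 𝓗). Suppose the Hamilton metric g_H^{μν} := (1/2) ∂̄^μ ∂̄^ν 𝓗 is horizontally metrical and the matrix (g_H^{μν}) is invertible at every point of phase space. Then N is of Cartan type: N_{μν} = k_ρ H^ρ_{μν} everywhere, where H^ρ_{μν} := ∂̄^ρ N_{μν}. -/

import Mathlib

open scoped BigOperators

/-- Phase space: `ℝⁿ × ℝⁿ` with coordinates `(x, k)`. -/
abbrev Phase (n : ℕ) := (Fin n → ℝ) × (Fin n → ℝ)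

/-- Spacetime partial derivative `∂_μ f`. -/
noncomputable def pdx {n : ℕ} (μ : Fin n) (f : Phase n → ℝ) (p : Phase n) : ℝ :=
  fderiv ℝ f p (Pi.single μ 1, 0)

/-- Momentum partial derivative `∂̄^μ f`. -/
noncomputable def pdk {n : ℕ} (μ : Fin n) (f : Phase n → ℝ) (p : Phase n) : ℝ :=
  fderiv ℝ f p (0, Pi.single μ 1)

/-- Horizontal derivative `δ_μ f = ∂_μ f + N_{νμ} ∂̄^ν f` associated to a
nonlinear connection `N`. -/
noncomputable def hderiv {n : ℕ} (N : Fin n → Fin n → Phase n → ℝ) (μ : Fin n)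
    (f : Phase n → ℝ) (p : Phase n) : ℝ :=
  pdx μ f p + ∑ ν, N ν μ p * pdk ν f p

/-- Hamilton metric `g_H^{μν} = (1/2) ∂̄^μ ∂̄^ν 𝓗`. -/
noncomputable def gHam {n : ℕ} (𝓗 : Phase n → ℝ) (μ ν : Fin n) (p : Phase n) : ℝ :=
  (1 / 2 : ℝ) * pdk μ (pdk ν 𝓗) p

section CartanAux

noncomputable def dd {n : ℕ} (v : Phase n) (f : Phase n → ℝ) (p : Phase n) : ℝ :=
  fderiv ℝ f p v

def ek {n : ℕ} (μ : Fin n) : Phase n := (0, Pi.single μ 1)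
def ex {n : ℕ} (μ : Fin n) : Phase n := (Pi.single μ 1, 0)

local notation "SM" => ((⊤ : ℕ∞) : WithTop ℕ∞)

lemma hplus : SM + 1 ≤ SM := by norm_cast

lemma hone : (1 : WithTop ℕ∞) ≤ SM := by exact_mod_cast le_top

variable {n : ℕ}

lemma pdk_eq (μ : Fin n) (f : Phase n → ℝ) : pdk μ f = dd (ek μ) f := rfl
lemma pdx_eq (μ : Fin n) (f : Phase n → ℝ) : pdx μ f = dd (ex μ) f := rfl
lemma gHam_eq (𝓗 : Phase n → ℝ) (ρ σ : Fin n) :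
    gHam 𝓗 ρ σ = fun p => (1 / 2 : ℝ) * dd (ek ρ) (dd (ek σ) 𝓗) p := rfl

lemma contDiff_dd {f : Phase n → ℝ} (hf : ContDiff ℝ SM f) (v : Phase n) :
    ContDiff ℝ SM (dd v f) :=
  (hf.fderiv_right hplus).clm_apply contDiff_const

lemma diffAt {f : Phase n → ℝ} (hf : ContDiff ℝ SM f) (p : Phase n) :
    DifferentiableAt ℝ f p :=
  (hf.differentiable (zero_lt_one.trans_le hone).ne').differentiableAt

lemma contDiff_coord (ρ : Fin n) : ContDiff ℝ SM (fun q : Phase n => q.2 ρ) :=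
  ((ContinuousLinearMap.proj (R := ℝ) (φ := fun _ : Fin n => ℝ) ρ).comp
    (ContinuousLinearMap.snd ℝ (Fin n → ℝ) (Fin n → ℝ))).contDiff

lemma dd_add {f g : Phase n → ℝ} {p : Phase n} (v : Phase n)
    (hf : DifferentiableAt ℝ f p) (hg : DifferentiableAt ℝ g p) :
    dd v (fun q => f q + g q) p = dd v f p + dd v g p := by
  simp only [dd, fderiv_fun_add hf hg, ContinuousLinearMap.add_apply]

lemma dd_sub {f g : Phase n → ℝ} {p : Phase n} (v : Phase n)
    (hf : DifferentiableAt ℝ f p) (hg : DifferentiableAt ℝ g p) :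
    dd v (fun q => f q - g q) p = dd v f p - dd v g p := by
  simp only [dd, fderiv_fun_sub hf hg, ContinuousLinearMap.sub_apply]

lemma dd_mul {f g : Phase n → ℝ} {p : Phase n} (v : Phase n)
    (hf : DifferentiableAt ℝ f p) (hg : DifferentiableAt ℝ g p) :
    dd v (fun q => f q * g q) p = dd v f p * g p + f p * dd v g p := by
  simp only [dd, fderiv_fun_mul hf hg, ContinuousLinearMap.add_apply,
    ContinuousLinearMap.smul_apply, smul_eq_mul]
  ring

lemma dd_const_mul {f : Phase n → ℝ} {p : Phase n} (v : Phase n) (c : ℝ)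
    (hf : DifferentiableAt ℝ f p) :
    dd v (fun q => c * f q) p = c * dd v f p := by
  simp only [dd, fderiv_const_mul hf c, ContinuousLinearMap.smul_apply, smul_eq_mul]

lemma dd_const {p : Phase n} (v : Phase n) (c : ℝ) :
    dd v (fun _ => c) p = 0 := by
  simp [dd]

lemma dd_sum {ι : Type*} [Fintype ι] {f : ι → Phase n → ℝ} {p : Phase n} (v : Phase n)
    (hf : ∀ i, DifferentiableAt ℝ (f i) p) :
    dd v (fun q => ∑ i, f i q) p = ∑ i, dd v (f i) p := by
  simp only [dd, fderiv_fun_sum (fun i _ => hf i), ContinuousLinearMap.sum_apply]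

lemma dd_coord (ρ : Fin n) (v p : Phase n) :
    dd v (fun q : Phase n => q.2 ρ) p = v.2 ρ := by
  have : (fun q : Phase n => q.2 ρ) =
      ((ContinuousLinearMap.proj (R := ℝ) (φ := fun _ : Fin n => ℝ) ρ).comp
        (ContinuousLinearMap.snd ℝ (Fin n → ℝ) (Fin n → ℝ))) := rfl
  rw [dd, this, ContinuousLinearMap.fderiv]
  rfl

lemma dd_swap {f : Phase n → ℝ} (hf : ContDiff ℝ SM f) (v w : Phase n) (p : Phase n) :
    dd v (dd w f) p = dd w (dd v f) p := by
  have hdf : ContDiff ℝ SM (fderiv ℝ f) := hf.fderiv_right hplus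
  have key : ∀ u z : Phase n, dd u (dd z f) p = fderiv ℝ (fderiv ℝ f) p u z := by
    intro u z
    have : dd z f = fun q => (fderiv ℝ f q) z := rfl
    rw [dd, this, fderiv_clm_apply ((hdf.differentiable (zero_lt_one.trans_le hone).ne').differentiableAt)
      (differentiableAt_const z)]
    simp
  rw [key, key]
  exact second_derivative_symmetric (fun y => (diffAt hf y).hasFDerivAt)
    ((hdf.differentiable (zero_lt_one.trans_le hone).ne').differentiableAt (x := p)).hasFDerivAt v w

lemma dd_swap_fun {f : Phase n → ℝ} (hf : ContDiff ℝ SM f) (v w : Phase n) :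
    dd v (dd w f) = dd w (dd v f) :=
  funext fun p => dd_swap hf v w p

lemma dd_congr {f g : Phase n → ℝ} (h : ∀ q, f q = g q) (v : Phase n) (p : Phase n) :
    dd v f p = dd v g p := by
  rw [show f = g from funext h]

/-- derivative of a sum of products. -/
lemma dd_sum_mul {F G : Fin n → Phase n → ℝ} {p : Phase n} (v : Phase n)
    (hF : ∀ i, ContDiff ℝ SM (F i)) (hG : ∀ i, ContDiff ℝ SM (G i)) :
    dd v (fun q => ∑ i, F i q * G i q) p
      = ∑ i, (dd v (F i) p * G i p + F i p * dd v (G i) p) := by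
  rw [dd_sum v (fun i => (diffAt ((hF i).mul (hG i)) p))]
  exact Finset.sum_congr rfl fun i _ => dd_mul v (diffAt (hF i) p) (diffAt (hG i) p)

/-- derivative of `∑ ρ, k_ρ * F ρ`. -/
lemma dd_coordsum {F : Fin n → Phase n → ℝ} {p : Phase n} (v : Phase n)
    (hF : ∀ i, ContDiff ℝ SM (F i)) :
    dd v (fun q => ∑ ρ, q.2 ρ * F ρ q) p
      = (∑ ρ, v.2 ρ * F ρ p) + ∑ ρ, p.2 ρ * dd v (F ρ) p := by
  rw [dd_sum_mul v contDiff_coord hF, Finset.sum_add_distrib]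
  congr 1
  exact Finset.sum_congr rfl fun ρ _ => by rw [dd_coord]

lemma sum_single_mul (σ : Fin n) (a : Fin n → ℝ) :
    ∑ ρ, (Pi.single σ (1:ℝ) : Fin n → ℝ) ρ * a ρ = a σ := by
  simp [Pi.single_apply]

end CartanAux
local notation "SM" => ((⊤ : ℕ∞) : WithTop ℕ∞)

/-- If an autoparallel `𝓗` is `r`-homogeneous in momenta, with horizontally metrical
and everywhere invertible Hamilton metric, then `N` is of Cartan type:
`N_{μν} = k_ρ H^ρ_{μν}` with `H^ρ_{μν} = ∂̄^ρ N_{μν}`. -/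
theorem cartan_type_of_homogeneous_autoparallel {n : ℕ} (hn : 0 < n)
    (N : Fin n → Fin n → Phase n → ℝ)
    (hNsmooth : ∀ μ ν, ContDiff ℝ (⊤ : ℕ∞) (N μ ν))
    (hNsym : ∀ μ ν, N μ ν = N ν μ)
    (𝓗 : Phase n → ℝ) (h𝓗 : ContDiff ℝ (⊤ : ℕ∞) 𝓗)
    (hauto : ∀ μ p, hderiv N μ 𝓗 p = 0)
    (r : ℝ)
    (hhom : ∀ p : Phase n, ∑ ρ, p.2 ρ * pdk ρ 𝓗 p = r * 𝓗 p)
    (hmetrical : ∀ μ ρ σ p, hderiv N μ (gHam 𝓗 ρ σ) p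
        + ∑ lam, gHam 𝓗 lam σ p * pdk ρ (N lam μ) p
        + ∑ lam, gHam 𝓗 ρ lam p * pdk σ (N lam μ) p = 0)
    (hinv : ∀ p : Phase n, IsUnit (Matrix.of fun μ ν => gHam 𝓗 μ ν p)) :
    ∀ μ ν (p : Phase n), N μ ν p = ∑ ρ, p.2 ρ * pdk ρ (N μ ν) p := by
  have hH : ContDiff ℝ SM 𝓗 := h𝓗.of_le (by simp)
  have hN : ∀ μ ν, ContDiff ℝ SM (N μ ν) := fun μ ν => (hNsmooth μ ν).of_le (by simp)
  have cA : ∀ ν : Fin n, ContDiff ℝ SM (dd (ek ν) 𝓗) := fun ν => contDiff_dd hH _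
  have cB : ∀ a b : Fin n, ContDiff ℝ SM (dd (ek a) (dd (ek b) 𝓗)) :=
    fun a b => contDiff_dd (cA b) _
  have cX : ∀ μ : Fin n, ContDiff ℝ SM (dd (ex μ) 𝓗) := fun μ => contDiff_dd hH _
  have cNd : ∀ (v : Phase n) (ν μ : Fin n), ContDiff ℝ SM (dd v (N ν μ)) :=
    fun v ν μ => contDiff_dd (hN ν μ) v
  have Bsym : ∀ (a b : Fin n) (p : Phase n),
      dd (ek a) (dd (ek b) 𝓗) p = dd (ek b) (dd (ek a) 𝓗) p :=
    fun a b p => dd_swap hH _ _ p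
  have dd3 : ∀ (a b c : Fin n) (p : Phase n),
      dd (ek a) (dd (ek b) (dd (ek c) 𝓗)) p
        = dd (ek c) (dd (ek a) (dd (ek b) 𝓗)) p := by
    intro a b c p
    rw [dd_swap_fun hH (ek b) (ek c), dd_swap (cA b) (ek a) (ek c) p]
  -- hypotheses in `dd` language
  have hhom' : ∀ p : Phase n, ∑ ρ, p.2 ρ * dd (ek ρ) 𝓗 p = r * 𝓗 p := hhom
  have hauto' : ∀ (μ : Fin n) (p : Phase n),
      dd (ex μ) 𝓗 p + ∑ ν, N ν μ p * dd (ek ν) 𝓗 p = 0 := hauto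
  have hmetr' : ∀ (μ ρ σ : Fin n) (p : Phase n),
      dd (ex μ) (gHam 𝓗 ρ σ) p + ∑ ν, N ν μ p * dd (ek ν) (gHam 𝓗 ρ σ) p
        + ∑ l, gHam 𝓗 l σ p * dd (ek ρ) (N l μ) p
        + ∑ l, gHam 𝓗 ρ l p * dd (ek σ) (N l μ) p = 0 := hmetrical
  have gd : ∀ (v : Phase n) (a b : Fin n) (p : Phase n),
      dd v (gHam 𝓗 a b) p = (1/2 : ℝ) * dd v (dd (ek a) (dd (ek b) 𝓗)) p := by
    intro v a b p
    rw [gHam_eq]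
    exact dd_const_mul v _ (diffAt (cB a b) p)
  have gval : ∀ (a b : Fin n) (p : Phase n),
      gHam 𝓗 a b p = (1/2 : ℝ) * dd (ek a) (dd (ek b) 𝓗) p := fun a b p => rfl
  -- derivative of homogeneity
  have hhomD : ∀ (v : Phase n) (p : Phase n),
      (∑ ρ, v.2 ρ * dd (ek ρ) 𝓗 p) + ∑ ρ, p.2 ρ * dd v (dd (ek ρ) 𝓗) p
        = r * dd v 𝓗 p := by
    intro v p
    have h1 : dd v (fun q : Phase n => ∑ ρ, q.2 ρ * dd (ek ρ) 𝓗 q) p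
        = dd v (fun q => r * 𝓗 q) p := dd_congr (fun q => hhom' q) v p
    rwa [dd_coordsum v cA, dd_const_mul v r (diffAt hH p)] at h1
  have S1 : ∀ (σ : Fin n) (p : Phase n),
      ∑ ρ, p.2 ρ * dd (ek σ) (dd (ek ρ) 𝓗) p = (r - 1) * dd (ek σ) 𝓗 p := by
    intro σ p
    have h := hhomD (ek σ) p
    rw [show (ek σ : Phase n).2 = Pi.single σ (1:ℝ) from rfl, sum_single_mul] at h
    linarith
  have S1x : ∀ (μ : Fin n) (p : Phase n),
      ∑ ρ, p.2 ρ * dd (ex μ) (dd (ek ρ) 𝓗) p = r * dd (ex μ) 𝓗 p := by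
    intro μ p
    have h := hhomD (ex μ) p
    rw [show (ex μ : Phase n).2 = (0 : Fin n → ℝ) from rfl] at h
    simpa using h
  -- derivative of the autoparallel equation
  have hautoD : ∀ (v : Phase n) (μ : Fin n) (p : Phase n),
      dd v (dd (ex μ) 𝓗) p
        + ∑ ν, (dd v (N ν μ) p * dd (ek ν) 𝓗 p + N ν μ p * dd v (dd (ek ν) 𝓗) p)
        = 0 := by
    intro v μ p
    have h1 : dd v (fun q : Phase n =>
          dd (ex μ) 𝓗 q + ∑ ν, N ν μ q * dd (ek ν) 𝓗 q) p
        = dd v (fun _ : Phase n => (0:ℝ)) p := dd_congr (fun q => hauto' μ q) v p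
    rw [dd_const, dd_add v (diffAt (cX μ) p)
        (diffAt (ContDiff.sum fun ν _ => (hN ν μ).mul (cA ν)) p),
      dd_sum_mul v (fun ν => hN ν μ) cA] at h1
    exact h1
  -- the contracted identity (♦)
  have diamond : ∀ (μ : Fin n) (p : Phase n),
      ∑ ν, ((∑ ρ, p.2 ρ * dd (ek ρ) (N ν μ) p) - N ν μ p) * dd (ek ν) 𝓗 p = 0 := by
    intro μ p
    have e1 : ∑ ρ, p.2 ρ * (dd (ek ρ) (dd (ex μ) 𝓗) p
        + ∑ ν, (dd (ek ρ) (N ν μ) p * dd (ek ν) 𝓗 p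
            + N ν μ p * dd (ek ρ) (dd (ek ν) 𝓗) p)) = 0 :=
      Finset.sum_eq_zero fun ρ _ => by rw [hautoD (ek ρ) μ p, mul_zero]
    have key : ∑ ρ, p.2 ρ * (dd (ek ρ) (dd (ex μ) 𝓗) p
        + ∑ ν, (dd (ek ρ) (N ν μ) p * dd (ek ν) 𝓗 p
            + N ν μ p * dd (ek ρ) (dd (ek ν) 𝓗) p))
        = (∑ ρ, p.2 ρ * dd (ek ρ) (dd (ex μ) 𝓗) p)
          + ∑ ν, ((∑ ρ, p.2 ρ * dd (ek ρ) (N ν μ) p) * dd (ek ν) 𝓗 p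
              + N ν μ p * ∑ ρ, p.2 ρ * dd (ek ρ) (dd (ek ν) 𝓗) p) := by
      calc ∑ ρ, p.2 ρ * (dd (ek ρ) (dd (ex μ) 𝓗) p
            + ∑ ν, (dd (ek ρ) (N ν μ) p * dd (ek ν) 𝓗 p
                + N ν μ p * dd (ek ρ) (dd (ek ν) 𝓗) p))
          = ∑ ρ, (p.2 ρ * dd (ek ρ) (dd (ex μ) 𝓗) p
            + ∑ ν, p.2 ρ * (dd (ek ρ) (N ν μ) p * dd (ek ν) 𝓗 p
                + N ν μ p * dd (ek ρ) (dd (ek ν) 𝓗) p)) :=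
            Finset.sum_congr rfl fun ρ _ => by rw [mul_add, Finset.mul_sum]
        _ = (∑ ρ, p.2 ρ * dd (ek ρ) (dd (ex μ) 𝓗) p)
            + ∑ ρ, ∑ ν, p.2 ρ * (dd (ek ρ) (N ν μ) p * dd (ek ν) 𝓗 p
                + N ν μ p * dd (ek ρ) (dd (ek ν) 𝓗) p) := Finset.sum_add_distrib
        _ = (∑ ρ, p.2 ρ * dd (ek ρ) (dd (ex μ) 𝓗) p)
            + ∑ ν, ∑ ρ, p.2 ρ * (dd (ek ρ) (N ν μ) p * dd (ek ν) 𝓗 p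
                + N ν μ p * dd (ek ρ) (dd (ek ν) 𝓗) p) := by rw [Finset.sum_comm]
        _ = (∑ ρ, p.2 ρ * dd (ek ρ) (dd (ex μ) 𝓗) p)
            + ∑ ν, ((∑ ρ, p.2 ρ * dd (ek ρ) (N ν μ) p) * dd (ek ν) 𝓗 p
                + N ν μ p * ∑ ρ, p.2 ρ * dd (ek ρ) (dd (ek ν) 𝓗) p) := by
            refine congrArg _ (Finset.sum_congr rfl fun ν _ => ?_)
            rw [Finset.sum_mul, Finset.mul_sum, ← Finset.sum_add_distrib]
            exact Finset.sum_congr rfl fun ρ _ => by ring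
    rw [key] at e1
    have p1 : ∑ ρ, p.2 ρ * dd (ek ρ) (dd (ex μ) 𝓗) p = r * dd (ex μ) 𝓗 p := by
      rw [Finset.sum_congr rfl fun ρ _ =>
        (by rw [dd_swap hH (ek ρ) (ex μ) p] :
          p.2 ρ * dd (ek ρ) (dd (ex μ) 𝓗) p = p.2 ρ * dd (ex μ) (dd (ek ρ) 𝓗) p)]
      exact S1x μ p
    have p2 : ∀ ν : Fin n, ∑ ρ, p.2 ρ * dd (ek ρ) (dd (ek ν) 𝓗) p
        = (r - 1) * dd (ek ν) 𝓗 p := by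
      intro ν
      rw [Finset.sum_congr rfl fun ρ _ =>
        (by rw [Bsym ρ ν p] :
          p.2 ρ * dd (ek ρ) (dd (ek ν) 𝓗) p = p.2 ρ * dd (ek ν) (dd (ek ρ) 𝓗) p)]
      exact S1 ν p
    rw [p1, Finset.sum_congr rfl fun ν _ => by rw [p2 ν]] at e1
    -- split sums
    have e2 : r * dd (ex μ) 𝓗 p
        + ((∑ ν, (∑ ρ, p.2 ρ * dd (ek ρ) (N ν μ) p) * dd (ek ν) 𝓗 p)
          + (r - 1) * ∑ ν, N ν μ p * dd (ek ν) 𝓗 p) = 0 := by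
      rw [← e1]
      congr 1
      rw [Finset.sum_add_distrib]
      congr 1
      rw [Finset.mul_sum]
      exact Finset.sum_congr rfl fun ν _ => by ring
    have e3 : ∑ ν, ((∑ ρ, p.2 ρ * dd (ek ρ) (N ν μ) p) - N ν μ p) * dd (ek ν) 𝓗 p
        = (∑ ν, (∑ ρ, p.2 ρ * dd (ek ρ) (N ν μ) p) * dd (ek ν) 𝓗 p)
          - ∑ ν, N ν μ p * dd (ek ν) 𝓗 p := by
      rw [← Finset.sum_sub_distrib]
      exact Finset.sum_congr rfl fun ν _ => by ring
    have e4 := hauto' μ p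
    rw [e3]
    linear_combination e2 - r * e4
  -- second derivative of the autoparallel equation
  have S5pre : ∀ (σ ρ μ : Fin n) (p : Phase n),
      dd (ek σ) (dd (ek ρ) (dd (ex μ) 𝓗)) p
        + ∑ ν, ((dd (ek σ) (dd (ek ρ) (N ν μ)) p * dd (ek ν) 𝓗 p
              + dd (ek ρ) (N ν μ) p * dd (ek σ) (dd (ek ν) 𝓗) p)
            + (dd (ek σ) (N ν μ) p * dd (ek ρ) (dd (ek ν) 𝓗) p
              + N ν μ p * dd (ek σ) (dd (ek ρ) (dd (ek ν) 𝓗)) p)) = 0 := by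
    intro σ ρ μ p
    have h1 : dd (ek σ) (fun q : Phase n =>
          dd (ek ρ) (dd (ex μ) 𝓗) q
          + ∑ ν, (dd (ek ρ) (N ν μ) q * dd (ek ν) 𝓗 q
              + N ν μ q * dd (ek ρ) (dd (ek ν) 𝓗) q)) p
        = dd (ek σ) (fun _ : Phase n => (0:ℝ)) p :=
      dd_congr (fun q => hautoD (ek ρ) μ q) (ek σ) p
    rw [dd_const, dd_add (ek σ) (diffAt (contDiff_dd (cX μ) (ek ρ)) p)
        (diffAt (ContDiff.sum fun ν _ =>
          ((cNd (ek ρ) ν μ).mul (cA ν)).add ((hN ν μ).mul (cB ρ ν))) p),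
      dd_sum (ek σ) (fun ν => diffAt
          (((cNd (ek ρ) ν μ).mul (cA ν)).add ((hN ν μ).mul (cB ρ ν))) p)] at h1
    rw [Finset.sum_congr rfl (fun ν _ => by
      rw [dd_add (ek σ) (diffAt ((cNd (ek ρ) ν μ).mul (cA ν)) p)
          (diffAt ((hN ν μ).mul (cB ρ ν)) p),
        dd_mul (ek σ) (diffAt (cNd (ek ρ) ν μ) p) (diffAt (cA ν) p),
        dd_mul (ek σ) (diffAt (hN ν μ) p) (diffAt (cB ρ ν) p)])] at h1
    exact h1
  -- the key vanishing of the contracted second derivative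
  have S5 : ∀ (σ ρ μ : Fin n) (p : Phase n),
      ∑ ν, dd (ek σ) (dd (ek ρ) (N ν μ)) p * dd (ek ν) 𝓗 p = 0 := by
    intro σ ρ μ p
    have h1 := S5pre σ ρ μ p
    -- rewrite first term and the N·third-derivative term
    have swap1 : dd (ek σ) (dd (ek ρ) (dd (ex μ) 𝓗)) p
        = dd (ex μ) (dd (ek σ) (dd (ek ρ) 𝓗)) p := by
      rw [dd_swap_fun hH (ek ρ) (ex μ), dd_swap (cA ρ) (ek σ) (ex μ) p]
    rw [swap1, Finset.sum_congr rfl (fun ν _ => by rw [dd3 σ ρ ν p])] at h1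
    -- split the sum in h1
    rw [Finset.sum_add_distrib, Finset.sum_add_distrib, Finset.sum_add_distrib] at h1
    -- the metricity condition, normalized
    have hm := hmetr' μ σ ρ p
    rw [gd (ex μ) σ ρ p] at hm
    have c1 : ∑ ν, N ν μ p * dd (ek ν) (gHam 𝓗 σ ρ) p
        = (1/2 : ℝ) * ∑ ν, N ν μ p * dd (ek ν) (dd (ek σ) (dd (ek ρ) 𝓗)) p := by
      rw [Finset.mul_sum]
      exact Finset.sum_congr rfl fun ν _ => by rw [gd (ek ν) σ ρ p]; ring
    have c2 : ∑ l, gHam 𝓗 l ρ p * dd (ek σ) (N l μ) p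
        = (1/2 : ℝ) * ∑ l, dd (ek σ) (N l μ) p * dd (ek ρ) (dd (ek l) 𝓗) p := by
      rw [Finset.mul_sum]
      refine Finset.sum_congr rfl fun l _ => ?_
      rw [gval l ρ p, Bsym l ρ p]; ring
    have c3 : ∑ l, gHam 𝓗 σ l p * dd (ek ρ) (N l μ) p
        = (1/2 : ℝ) * ∑ l, dd (ek ρ) (N l μ) p * dd (ek σ) (dd (ek l) 𝓗) p := by
      rw [Finset.mul_sum]
      refine Finset.sum_congr rfl fun l _ => ?_
      rw [gval σ l p]; ring
    rw [c1, c2, c3] at hm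
    linarith [h1, hm]
  -- derivative of ♦
  have S6 : ∀ (μ : Fin n) (p : Phase n) (σ : Fin n),
      ∑ ν, gHam 𝓗 σ ν p * ((∑ ρ, p.2 ρ * dd (ek ρ) (N ν μ) p) - N ν μ p) = 0 := by
    intro μ p σ
    have cu : ∀ ν : Fin n, ContDiff ℝ SM
        (fun q : Phase n => (∑ ρ, q.2 ρ * dd (ek ρ) (N ν μ) q) - N ν μ q) :=
      fun ν => (ContDiff.sum fun ρ _ => (contDiff_coord ρ).mul (cNd (ek ρ) ν μ)).sub (hN ν μ)
    have h1 : dd (ek σ) (fun q : Phase n =>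
          ∑ ν, ((∑ ρ, q.2 ρ * dd (ek ρ) (N ν μ) q) - N ν μ q) * dd (ek ν) 𝓗 q) p
        = dd (ek σ) (fun _ : Phase n => (0:ℝ)) p :=
      dd_congr (fun q => diamond μ q) (ek σ) p
    rw [dd_const, dd_sum_mul (ek σ) cu cA] at h1
    have h2 : ∀ ν : Fin n, dd (ek σ)
        (fun q : Phase n => (∑ ρ, q.2 ρ * dd (ek ρ) (N ν μ) q) - N ν μ q) p
        = ∑ ρ, p.2 ρ * dd (ek σ) (dd (ek ρ) (N ν μ)) p := by
      intro ν
      rw [dd_sub (ek σ)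
          (diffAt (ContDiff.sum fun ρ _ => (contDiff_coord ρ).mul (cNd (ek ρ) ν μ)) p)
          (diffAt (hN ν μ) p),
        dd_coordsum (ek σ) (fun ρ => cNd (ek ρ) ν μ),
        show (ek σ : Phase n).2 = Pi.single σ (1:ℝ) from rfl, sum_single_mul]
      ring
    rw [Finset.sum_congr rfl fun ν _ => by rw [h2 ν]] at h1
    rw [Finset.sum_add_distrib] at h1
    have h3 : ∑ ν, (∑ ρ, p.2 ρ * dd (ek σ) (dd (ek ρ) (N ν μ)) p) * dd (ek ν) 𝓗 p
        = 0 := by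
      have : ∀ ν : Fin n, (∑ ρ, p.2 ρ * dd (ek σ) (dd (ek ρ) (N ν μ)) p) * dd (ek ν) 𝓗 p
          = ∑ ρ, p.2 ρ * (dd (ek σ) (dd (ek ρ) (N ν μ)) p * dd (ek ν) 𝓗 p) := by
        intro ν
        rw [Finset.sum_mul]
        exact Finset.sum_congr rfl fun ρ _ => by ring
      rw [Finset.sum_congr rfl fun ν _ => this ν, Finset.sum_comm]
      refine Finset.sum_eq_zero fun ρ _ => ?_
      rw [← Finset.mul_sum, S5 σ ρ μ p, mul_zero]
    rw [h3, zero_add] at h1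
    -- h1 : ∑ ν, u ν * dd (ek σ) (dd (ek ν) 𝓗) p = 0
    have h4 : ∑ ν, gHam 𝓗 σ ν p * ((∑ ρ, p.2 ρ * dd (ek ρ) (N ν μ) p) - N ν μ p)
        = (1/2 : ℝ) * ∑ ν, ((∑ ρ, p.2 ρ * dd (ek ρ) (N ν μ) p) - N ν μ p)
            * dd (ek σ) (dd (ek ν) 𝓗) p := by
      rw [Finset.mul_sum]
      exact Finset.sum_congr rfl fun ν _ => by rw [gval σ ν p]; ring
    rw [h4, h1, mul_zero]
  -- conclude via invertibility of the Hamilton metric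
  intro μ ν p
  set G : Matrix (Fin n) (Fin n) ℝ := Matrix.of fun a b => gHam 𝓗 a b p with hG
  set u : Fin n → ℝ := fun b => (∑ ρ, p.2 ρ * dd (ek ρ) (N b ν) p) - N b ν p with hu
  have hGu : G.mulVec u = 0 := by
    funext σ
    show ∑ b, gHam 𝓗 σ b p * u b = 0
    exact S6 ν p σ
  have hdet : IsUnit G.det := (Matrix.isUnit_iff_isUnit_det G).mp (hinv p)
  have hu0 : u = 0 := by
    have h2 := congrArg (fun w => Matrix.mulVec G⁻¹ w) hGu
    simpa [Matrix.mulVec_mulVec, Matrix.nonsing_inv_mul G hdet, Matrix.one_mulVec,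
      Matrix.mulVec_zero] using h2
  have := congrFun hu0 μ
  have huμ : (∑ ρ, p.2 ρ * dd (ek ρ) (N μ ν) p) - N μ ν p = 0 := this
  show N μ ν p = ∑ ρ, p.2 ρ * dd (ek ρ) (N μ ν) p
  linarith
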